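/- Let Γ̃, B̃ ∈ ℝ^{n×k} with Γ̃ of full rank k, let ν_n > 0, x ≥ 0, Λ = diag(e^{ν_1 x},…,e^{ν_n x}) with ν_1 ≥ … ≥ ν_n > 0, and set Γ = ΛΓ̃, B = Λ^{-1}B̃, μ* = min σ(Γ̃ᵀΓ̃). Then ‖B(ΓᵀΓ)^{-1}Bᵀ‖ ≤ (1/μ*) e^{-4ν_n x} ‖B̃‖² and ‖Γ(ΓᵀΓ)^{-1}Bᵀ‖ ≤ (1/√μ*) e^{-2ν_n x} ‖B̃‖. -/

import Mathlib

/-!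
Since `Γᵀ Γ = Γ̃ᵀ Λ² Γ̃` and every diagonal entry of `Λ` is at least `e := exp (ν_n x)`, the
quadratic form of `Γᵀ Γ` dominates `μ* e² ‖v‖²`, hence `‖(Γᵀ Γ)⁻¹‖ ≤ (μ* e²)⁻¹`. Together with
`‖B‖ ≤ ‖Λ⁻¹‖ ‖B̃‖ ≤ e⁻¹ ‖B̃‖` this gives the first bound. For `M = Γ (Γᵀ Γ)⁻¹ Bᵀ` one has
`Mᵀ M = B (Γᵀ Γ)⁻¹ Bᵀ`, so the second bound is the square root of the first by `‖M‖² = ‖Mᵀ M‖`.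
-/

open Matrix

noncomputable def euclideanOpNorm {m n : ℕ} (M : Matrix (Fin m) (Fin n) ℝ) : ℝ :=
  ‖LinearMap.toContinuousLinearMap (Matrix.toEuclideanLin M)‖

open scoped Matrix.Norms.L2Operator

namespace Matrix

variable {m k : Type*} [Fintype m] [Fintype k]

theorem dotProduct_transpose_mul_self_mulVec (M : Matrix m k ℝ) (v : k → ℝ) :
    v ⬝ᵥ ((Mᵀ * M) *ᵥ v) = (M *ᵥ v) ⬝ᵥ (M *ᵥ v) := by
  rw [← mulVec_mulVec, dotProduct_mulVec, vecMul_transpose]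

variable [DecidableEq m] [DecidableEq k]

theorem sq_mul_dotProduct_self_le_diagonal {d : m → ℝ} {e : ℝ} (he : 0 ≤ e)
    (hd : ∀ i, e ≤ d i) (u : m → ℝ) :
    e ^ 2 * (u ⬝ᵥ u) ≤ (diagonal d *ᵥ u) ⬝ᵥ (diagonal d *ᵥ u) := by
  simp only [dotProduct, mulVec_diagonal, Finset.mul_sum]
  refine Finset.sum_le_sum fun i _ => ?_
  have := mul_le_mul (hd i) (hd i) he (he.trans (hd i))
  nlinarith [mul_self_nonneg (u i)]

theorem IsHermitian.mul_dotProduct_self_le {A : Matrix k k ℝ} (hA : A.IsHermitian)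
    {c : ℝ} (hc : ∀ μ ∈ spectrum ℝ A, c ≤ μ) (v : k → ℝ) : c * (v ⬝ᵥ v) ≤ v ⬝ᵥ (A *ᵥ v) := by
  have hpsd : (A - algebraMap ℝ _ c).PosSemidef := by
    refine posSemidef_iff_isHermitian_and_spectrum_nonneg.mpr ⟨?_, ?_⟩
    · exact hA.sub (IsSelfAdjoint.algebraMap _ (.all c))
    · rw [← spectrum.sub_singleton_eq]
      rintro _ ⟨μ, hμ, _, rfl, rfl⟩
      simpa using hc μ hμ
  have := hpsd.dotProduct_mulVec_nonneg v
  rw [Algebra.algebraMap_eq_smul_one, sub_mulVec, smul_mulVec, one_mulVec, star_trivial,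
    dotProduct_sub, dotProduct_smul, smul_eq_mul] at this
  linarith

theorem mul_sq_mul_dotProduct_self_le_gram_diagonal_mul {Γ₀ : Matrix m k ℝ} {μ : ℝ}
    (hμ : ∀ a ∈ spectrum ℝ (Γ₀ᵀ * Γ₀), μ ≤ a) {d : m → ℝ} {e : ℝ} (he : 0 ≤ e)
    (hd : ∀ i, e ≤ d i) (v : k → ℝ) :
    μ * e ^ 2 * (v ⬝ᵥ v) ≤ v ⬝ᵥ (((diagonal d * Γ₀)ᵀ * (diagonal d * Γ₀)) *ᵥ v) := by
  have hΓ₀ : μ * (v ⬝ᵥ v) ≤ (Γ₀ *ᵥ v) ⬝ᵥ (Γ₀ *ᵥ v) := by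
    rw [← dotProduct_transpose_mul_self_mulVec]
    refine IsHermitian.mul_dotProduct_self_le ?_ hμ v
    simpa only [conjTranspose_eq_transpose_of_trivial] using isHermitian_conjTranspose_mul_self Γ₀
  calc μ * e ^ 2 * (v ⬝ᵥ v) = e ^ 2 * (μ * (v ⬝ᵥ v)) := by ring
    _ ≤ e ^ 2 * ((Γ₀ *ᵥ v) ⬝ᵥ (Γ₀ *ᵥ v)) := by gcongr
    _ ≤ _ := sq_mul_dotProduct_self_le_diagonal he hd _
    _ = _ := by rw [dotProduct_transpose_mul_self_mulVec, mulVec_mulVec]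

theorem isUnit_of_coercive {A : Matrix k k ℝ} {c : ℝ} (hc : 0 < c)
    (hA : ∀ v, c * (v ⬝ᵥ v) ≤ v ⬝ᵥ (A *ᵥ v)) : IsUnit A := by
  refine mulVec_injective_iff_isUnit.mp fun v w hvw => ?_
  have h := hA (v - w)
  rw [mulVec_sub, hvw, sub_self, dotProduct_zero] at h
  have h0 : (v - w) ⬝ᵥ (v - w) = 0 :=
    le_antisymm (nonpos_of_mul_nonpos_right h hc)
      (by simpa using dotProduct_self_star_nonneg (v - w))
  exact sub_eq_zero.mp (dotProduct_self_eq_zero.mp h0)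

theorem l2_opNorm_inv_le_of_coercive {A : Matrix k k ℝ} {c : ℝ} (hc : 0 < c)
    (hA : ∀ v, c * (v ⬝ᵥ v) ≤ v ⬝ᵥ (A *ᵥ v)) : ‖A⁻¹‖ ≤ c⁻¹ := by
  have hdet := (isUnit_iff_isUnit_det A).mp (isUnit_of_coercive hc hA)
  rw [← l2_opNorm_toEuclideanCLM]
  refine ContinuousLinearMap.opNorm_le_bound _ (inv_nonneg.mpr hc.le) fun v => ?_
  set w := toEuclideanCLM (𝕜 := ℝ) A⁻¹ v
  have hAw : A *ᵥ w.ofLp = v.ofLp := by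
    simp [w, mulVec_mulVec, mul_nonsing_inv A hdet]
  have key : c * ‖w‖ ^ 2 ≤ ‖w‖ * ‖v‖ :=
    calc c * ‖w‖ ^ 2 = c * (w.ofLp ⬝ᵥ w.ofLp) := by
          rw [← real_inner_self_eq_norm_sq, EuclideanSpace.inner_eq_star_dotProduct, star_trivial]
      _ ≤ w.ofLp ⬝ᵥ v.ofLp := hAw ▸ hA w.ofLp
      _ = inner ℝ w v := by
          rw [EuclideanSpace.inner_eq_star_dotProduct, star_trivial, dotProduct_comm]
      _ ≤ ‖w‖ * ‖v‖ := real_inner_le_norm w v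
  rcases (norm_nonneg w).eq_or_lt with hw | hw
  · rw [← hw]; positivity
  · rw [inv_mul_eq_div, le_div_iff₀ hc]
    nlinarith

theorem l2_opNorm_transpose (B : Matrix m k ℝ) : ‖Bᵀ‖ = ‖B‖ := by
  rw [← conjTranspose_eq_transpose_of_trivial, l2_opNorm_conjTranspose]

theorem l2_opNorm_mul_mul_transpose_le (B : Matrix m k ℝ) (C : Matrix k k ℝ) :
    ‖B * C * Bᵀ‖ ≤ ‖B‖ ^ 2 * ‖C‖ :=
  calc ‖B * C * Bᵀ‖ ≤ ‖B‖ * ‖C‖ * ‖Bᵀ‖ :=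
        (l2_opNorm_mul _ _).trans (mul_le_mul_of_nonneg_right (l2_opNorm_mul _ _) (norm_nonneg _))
    _ = ‖B‖ ^ 2 * ‖C‖ := by rw [l2_opNorm_transpose]; ring

theorem l2_opNorm_mul_self_mul_inv_gram_mul_transpose (Γ B : Matrix m k ℝ)
    (hΓ : IsUnit (Γᵀ * Γ)) :
    ‖Γ * (Γᵀ * Γ)⁻¹ * Bᵀ‖ * ‖Γ * (Γᵀ * Γ)⁻¹ * Bᵀ‖ = ‖B * (Γᵀ * Γ)⁻¹ * Bᵀ‖ := by
  have hdet := (isUnit_iff_isUnit_det _).mp hΓ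
  rw [← l2_opNorm_conjTranspose_mul_self, conjTranspose_eq_transpose_of_trivial]
  simp only [transpose_mul, transpose_transpose, transpose_nonsing_inv, Matrix.mul_assoc]
  rw [← Matrix.mul_assoc Γᵀ Γ, nonsing_inv_mul_cancel_left _ _ hdet]

theorem l2_opNorm_inv_diagonal_le {d : m → ℝ} {e : ℝ} (he : 0 < e)
    (hd : ∀ i, e ≤ d i) : ‖(diagonal d)⁻¹‖ ≤ e⁻¹ := by
  have hinv : (diagonal d)⁻¹ = diagonal fun i => (d i)⁻¹ := by
    refine inv_eq_left_inv ?_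
    rw [diagonal_mul_diagonal]
    simp [inv_mul_cancel₀ (he.trans_le (hd _)).ne']
  rw [hinv, l2_opNorm_diagonal]
  refine (pi_norm_le_iff_of_nonneg (inv_nonneg.mpr he.le)).mpr fun i => ?_
  rw [Real.norm_of_nonneg (inv_nonneg.mpr (he.trans_le (hd i)).le)]
  exact inv_anti₀ he (hd i)

section Rescaled

variable {Γ₀ B₀ Γ B : Matrix m k ℝ} {μ : ℝ} {d : m → ℝ} {e : ℝ}

theorem l2_opNorm_mul_inv_gram_mul_transpose_le_of_rescaled
    (hμ : ∀ a ∈ spectrum ℝ (Γ₀ᵀ * Γ₀), μ ≤ a) (hμpos : 0 < μ) (he : 0 < e) (hd : ∀ i, e ≤ d i)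
    (hΓ : Γ = diagonal d * Γ₀) (hB : B = (diagonal d)⁻¹ * B₀) :
    ‖B * (Γᵀ * Γ)⁻¹ * Bᵀ‖ ≤ ‖B₀‖ ^ 2 / (μ * e ^ 4) := by
  have hcoer := mul_sq_mul_dotProduct_self_le_gram_diagonal_mul hμ he.le hd
  have hBnorm : ‖B‖ ≤ e⁻¹ * ‖B₀‖ :=
    hB ▸ (l2_opNorm_mul _ _).trans (by gcongr; exact l2_opNorm_inv_diagonal_le he hd)
  calc ‖B * (Γᵀ * Γ)⁻¹ * Bᵀ‖ ≤ ‖B‖ ^ 2 * ‖(Γᵀ * Γ)⁻¹‖ := l2_opNorm_mul_mul_transpose_le _ _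
    _ ≤ (e⁻¹ * ‖B₀‖) ^ 2 * (μ * e ^ 2)⁻¹ := by
        gcongr
        exact l2_opNorm_inv_le_of_coercive (by positivity) (hΓ ▸ hcoer)
    _ = ‖B₀‖ ^ 2 / (μ * e ^ 4) := by field_simp

theorem l2_opNorm_self_mul_inv_gram_mul_transpose_le_of_rescaled
    (hμ : ∀ a ∈ spectrum ℝ (Γ₀ᵀ * Γ₀), μ ≤ a) (hμpos : 0 < μ) (he : 0 < e) (hd : ∀ i, e ≤ d i)
    (hΓ : Γ = diagonal d * Γ₀) (hB : B = (diagonal d)⁻¹ * B₀) :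
    ‖Γ * (Γᵀ * Γ)⁻¹ * Bᵀ‖ ≤ ‖B₀‖ / (√μ * e ^ 2) := by
  have hgram : IsUnit (Γᵀ * Γ) :=
    isUnit_of_coercive (by positivity)
      (hΓ ▸ mul_sq_mul_dotProduct_self_le_gram_diagonal_mul hμ he.le hd)
  refine (mul_self_le_mul_self_iff (norm_nonneg _) (by positivity)).mpr ?_
  rw [l2_opNorm_mul_self_mul_inv_gram_mul_transpose _ _ hgram]
  calc ‖B * (Γᵀ * Γ)⁻¹ * Bᵀ‖ ≤ ‖B₀‖ ^ 2 / (μ * e ^ 4) :=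
        l2_opNorm_mul_inv_gram_mul_transpose_le_of_rescaled hμ hμpos he hd hΓ hB
    _ = ‖B₀‖ / (√μ * e ^ 2) * (‖B₀‖ / (√μ * e ^ 2)) := by
        field_simp
        rw [Real.sq_sqrt hμpos.le]

end Rescaled

end Matrix

theorem euclideanOpNorm_eq_l2_opNorm {m n : ℕ} (M : Matrix (Fin m) (Fin n) ℝ) :
    euclideanOpNorm M = ‖M‖ := rfl

theorem stmt_13_general (n k : ℕ) (Γtld Btld : Matrix (Fin (n + 1)) (Fin k) ℝ)
    (ν : Fin (n + 1) → ℝ) (hν : ∀ i j : Fin (n + 1), i ≤ j → ν j ≤ ν i)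
    (x : ℝ) (hx : 0 ≤ x)
    (L : Matrix (Fin (n + 1)) (Fin (n + 1)) ℝ)
    (hL : L = Matrix.diagonal fun i => Real.exp (ν i * x))
    (Γ B : Matrix (Fin (n + 1)) (Fin k) ℝ)
    (hΓ : Γ = L * Γtld) (hB : B = L⁻¹ * Btld)
    (μstar : ℝ)
    (hμ2 : ∀ μ ∈ spectrum ℝ (Γtldᵀ * Γtld), μstar ≤ μ) (hμpos : 0 < μstar) :
    euclideanOpNorm (B * (Γᵀ * Γ)⁻¹ * Bᵀ) ≤
        (1 / μstar) * Real.exp (-4 * ν (Fin.last n) * x) * euclideanOpNorm Btld ^ 2 ∧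
    euclideanOpNorm (Γ * (Γᵀ * Γ)⁻¹ * Bᵀ) ≤
        (1 / Real.sqrt μstar) * Real.exp (-2 * ν (Fin.last n) * x) * euclideanOpNorm Btld := by
  subst hL
  simp only [euclideanOpNorm_eq_l2_opNorm]
  set e := Real.exp (ν (Fin.last n) * x)
  have he : 0 < e := Real.exp_pos _
  have hd (i : Fin (n + 1)) : e ≤ Real.exp (ν i * x) :=
    Real.exp_le_exp.mpr (mul_le_mul_of_nonneg_right (hν i _ (Fin.le_last i)) hx)
  have hexp (c : ℕ) : Real.exp (-c * ν (Fin.last n) * x) = (e ^ c)⁻¹ := by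
    rw [← Real.exp_nat_mul, ← Real.exp_neg]; ring_nf
  refine ⟨(l2_opNorm_mul_inv_gram_mul_transpose_le_of_rescaled hμ2 hμpos he hd hΓ hB).trans_eq ?_,
    (l2_opNorm_self_mul_inv_gram_mul_transpose_le_of_rescaled hμ2 hμpos he hd hΓ hB).trans_eq ?_⟩
  · rw [show (-4 : ℝ) = -(4 : ℕ) by norm_num, hexp]; ring
  · rw [show (-2 : ℝ) = -(2 : ℕ) by norm_num, hexp]; ring

theorem stmt_13 (n k : ℕ) (Γtld Btld : Matrix (Fin (n + 1)) (Fin k) ℝ)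
    (hrank : Γtld.rank = k)
    (ν : Fin (n + 1) → ℝ) (hν : ∀ i j : Fin (n + 1), i ≤ j → ν j ≤ ν i)
    (hνpos : ∀ i, 0 < ν i) (x : ℝ) (hx : 0 ≤ x)
    (L : Matrix (Fin (n + 1)) (Fin (n + 1)) ℝ)
    (hL : L = Matrix.diagonal fun i => Real.exp (ν i * x))
    (Γ B : Matrix (Fin (n + 1)) (Fin k) ℝ)
    (hΓ : Γ = L * Γtld) (hB : B = L⁻¹ * Btld)
    (μstar : ℝ) (hμ1 : μstar ∈ spectrum ℝ (Γtldᵀ * Γtld))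
    (hμ2 : ∀ μ ∈ spectrum ℝ (Γtldᵀ * Γtld), μstar ≤ μ) (hμpos : 0 < μstar) :
    euclideanOpNorm (B * (Γᵀ * Γ)⁻¹ * Bᵀ) ≤
        (1 / μstar) * Real.exp (-4 * ν (Fin.last n) * x) * euclideanOpNorm Btld ^ 2 ∧
    euclideanOpNorm (Γ * (Γᵀ * Γ)⁻¹ * Bᵀ) ≤
        (1 / Real.sqrt μstar) * Real.exp (-2 * ν (Fin.last n) * x) * euclideanOpNorm Btld :=
  stmt_13_general n k Γtld Btld ν hν x hx L hL Γ B hΓ hB μstar hμ2 hμpos
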